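/- Let Σ be a linearly ordered alphabet and e : V → Σ* an injective map such that for any two distinct X, Y ∈ V, e(X) is not a suffix of e(Y). Let u, v ∈ V* be sequences such that neither is a suffix of the other (as sequences over V), and let X = u[p−l] and Y = v[q−l] be the rightmost symbols at which u and v differ, where p = |u|, q = |v|, and l is the length of the longest common suffix of u and v as sequences over V. Then e*(u) <_colex e*(v) if and only if e(X) <_colex e(Y); in particular, the colexicographic order of the expansions is determined by the colexicographic order of the expansions of the rightmost differing symbols. -/
import Mathlib

/-- Length of the longest common prefix of two strings (lists). -/
def lcp {A : Type*} [DecidableEq A] : List A → List A → ℕ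
  | a :: s, b :: t => if a = b then lcp s t + 1 else 0
  | _, _ => 0

/-- Length of the longest common suffix of two strings (lists). -/
def lcs {A : Type*} [DecidableEq A] (s t : List A) : ℕ := lcp s.reverse t.reverse

/-- The monoid homomorphism `e* : V* → Σ*` induced by `e : V → Σ*`. -/
def expand {V A : Type*} (e : V → List A) (F : List V) : List A := (F.map e).flatten

/-- Colexicographic order: compare the reversals lexicographically. -/
def colexLt {A : Type*} [LinearOrder A] (s t : List A) : Prop := s.reverse < t.reverse

lemma cons_lt_iff {A : Type*} [LinearOrder A] {a b : A} {s t : List A} :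
    a :: s < b :: t ↔ a < b ∨ (a = b ∧ s < t) := by
  constructor
  · intro h
    cases h with
    | cons h => exact Or.inr ⟨rfl, h⟩
    | rel h => exact Or.inl h
  · rintro (h | ⟨rfl, h⟩)
    · exact List.Lex.rel h
    · exact List.Lex.cons h

lemma append_lt_iff {A : Type*} [LinearOrder A] (c : List A) {s t : List A} :
    c ++ s < c ++ t ↔ s < t := by
  induction c with
  | nil => rfl
  | cons a c ih => simp [cons_lt_iff, ih]

lemma key_lt {A : Type*} [LinearOrder A] : ∀ {p q : List A}, ¬ p <+: q → ¬ q <+: p →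
    ∀ (s t : List A), (p ++ s < q ++ t ↔ p < q)
  | [], q, hp, _, _, _ => absurd (List.nil_prefix) hp
  | _ :: _, [], _, hq, _, _ => absurd (List.nil_prefix) hq
  | a :: p, b :: q, hp, hq, s, t => by
    rcases lt_trichotomy a b with h | rfl | h
    · simp [cons_lt_iff, h]
    · rw [List.cons_prefix_cons] at hp hq
      simp only [List.cons_append, cons_lt_iff, lt_irrefl, false_or, true_and]
      exact key_lt (fun h => hp ⟨rfl, h⟩) (fun h => hq ⟨rfl, h⟩) s t
    · constructor <;> intro hlt <;> cases hlt with
      | cons h' => exact absurd rfl (ne_of_gt h)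
      | rel h' => exact absurd h' (not_lt_of_gt h)

lemma lcp_spec {A : Type*} [DecidableEq A] : ∀ (s t : List A), ¬ s <+: t → ¬ t <+: s →
    ∃ c a b s' t', a ≠ b ∧ s = c ++ a :: s' ∧ t = c ++ b :: t' ∧
      s[lcp s t]? = some a ∧ t[lcp s t]? = some b
  | [], t, hp, _ => absurd (List.nil_prefix) hp
  | _ :: _, [], _, hq => absurd (List.nil_prefix) hq
  | a :: s, b :: t, hp, hq => by
    by_cases hab : a = b
    · subst hab
      rw [List.cons_prefix_cons] at hp hq
      obtain ⟨c, x, y, s', t', hxy, hs, ht, hsx, hty⟩ :=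
        lcp_spec s t (fun h => hp ⟨rfl, h⟩) (fun h => hq ⟨rfl, h⟩)
      exact ⟨a :: c, x, y, s', t', hxy, by rw [hs]; rfl, by rw [ht]; rfl,
        by simpa [lcp], by simpa [lcp]⟩
    · exact ⟨[], a, b, s, t, hab, rfl, rfl, by simp [lcp, hab], by simp [lcp, hab]⟩

lemma expand_reverse {V A : Type*} (e : V → List A) (s : List V) :
    (expand e s).reverse = expand (fun x => (e x).reverse) s.reverse := by
  simp [expand, List.reverse_flatten, Function.comp_def]

lemma expand_append {V A : Type*} (e : V → List A) (s t : List V) :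
    expand e (s ++ t) = expand e s ++ expand e t := by
  simp [expand]

/-- with `e` injective and suffix-free images, and `u, v` sequences over
`V` neither of which is a suffix of the other, with rightmost differing symbols
`X = u[p-l]` and `Y = v[q-l]` (1-indexed, where `p = |u|`, `q = |v|` and `l` is the
length of the longest common suffix of `u` and `v` over `V`), the colexicographic order
of `e* u` and `e* v` is determined by that of `e X` and `e Y`. -/
theorem stmt_16 {V A : Type*} [DecidableEq V] [LinearOrder A]
    (e : V → List A) (he : Function.Injective e)
    (hsf : ∀ X Y : V, X ≠ Y → ¬ e X <:+ e Y)
    (u v : List V) (h1 : ¬ u <:+ v) (h2 : ¬ v <:+ u)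
    (p q l : ℕ) (hp : p = u.length) (hq : q = v.length) (hl : l = lcs u v)
    (X Y : V) (hX : u[p - l - 1]? = some X) (hY : v[q - l - 1]? = some Y) :
    (colexLt (expand e u) (expand e v) ↔ colexLt (e X) (e Y)) := by
  have hus : ¬ u.reverse <+: v.reverse := fun h => h1 (List.reverse_prefix.mp h)
  have hvs : ¬ v.reverse <+: u.reverse := fun h => h2 (List.reverse_prefix.mp h)
  obtain ⟨c, x, y, s', t', hxy, hs, ht, hsx, hty⟩ := lcp_spec u.reverse v.reverse hus hvs
  have hll : lcp u.reverse v.reverse = l := by rw [hl]; rfl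
  rw [hll] at hsx hty
  -- identify x = X, y = Y
  have hlu : l < u.length := by
    have := List.getElem?_eq_some_iff.mp hsx
    simpa using this.1
  have hlv : l < v.length := by
    have := List.getElem?_eq_some_iff.mp hty
    simpa using this.1
  have hxX : x = X := by
    rw [List.getElem?_reverse (by simpa using hlu)] at hsx
    rw [hp, Nat.sub_sub, Nat.add_comm] at hX
    rw [← Nat.sub_sub] at hX
    rw [hX] at hsx
    exact Option.some_inj.mp hsx.symm
  have hyY : y = Y := by
    rw [List.getElem?_reverse (by simpa using hlv)] at hty
    rw [hq, Nat.sub_sub, Nat.add_comm] at hY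
    rw [← Nat.sub_sub] at hY
    rw [hY] at hty
    exact Option.some_inj.mp hty.symm
  subst hxX hyY
  have hne : x ≠ y := hxy
  have h1' : ¬ (e x).reverse <+: (e y).reverse := fun h =>
    hsf x y hne (List.reverse_prefix.mp h)
  have h2' : ¬ (e y).reverse <+: (e x).reverse := fun h =>
    hsf y x hne.symm (List.reverse_prefix.mp h)
  unfold colexLt
  rw [expand_reverse, expand_reverse, hs, ht, expand_append, expand_append]
  show expand _ c ++ ((e x).reverse ++ expand _ s') < expand _ c ++ ((e y).reverse ++ expand _ t')
      ↔ _
  rw [append_lt_iff, key_lt h1' h2']
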